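/- For every integer k ≥ 1 and every real λ > 0, every mode m of the Poisson distribution of order k with parameter λ satisfies ⌊κλ⌋ − κ + 1 − δ_{k,1} ≤ m ≤ ⌊κλ⌋, where κ = k(k+1)/2 and δ_{k,1} equals 1 if k = 1 and 0 otherwise. -/

import Mathlib

/-!
Write `T(n)` for the tuples `t` with `∑ (i + 1) tᵢ = n`, `h(n) = ∑_{T(n)} w(t)` and
`M_c(n) = ∑_{T(n)} t_c w(t)`.
Counting parts gives `n h(n) = ∑_c (c + 1) M_c(n)`, and removing one part of size `c + 1` gives
`M_c(n) = λ h(n - c - 1)`; at a mode `m` this yields `m ≤ κλ`.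
For the lower bound, the tuples of `m + c + 1` with `t_c ≠ 0` have total weight
`λ ∑_{T(m)} w(t) / (t_c + 1) ≤ h(m + c + 1) ≤ h(m)`, which Cauchy–Schwarz bounds from below by
`λ h(m)² / (M_c(m) + h(m))`. Hence `λ h(m) ≤ M_c(m) + h(m)`, and summing with weights `c + 1`
gives `κλ ≤ m + κ`. It is strict for `k ≥ 2`: when `c ≠ 0`, the tuple `(m + c + 1, 0, …, 0)` is
missing from the first sum.
-/

/-- Scaled pmf of the Poisson distribution of order `k`:
`h_k(n;λ) = Σ λ^(n₁+⋯+n_k)/(n₁!⋯n_k!)`, summed over all `k`-tuples `(n₁,…,n_k)`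
of nonnegative integers with `n₁ + 2n₂ + ⋯ + k·n_k = n`.
(Each `n_i` is at most `n` whenever the constraint holds, so the range is exhaustive.) -/
noncomputable def poissonOrderH (k n : ℕ) (lam : ℝ) : ℝ :=
  ∑ t ∈ (Fintype.piFinset fun _ : Fin k => Finset.range (n + 1)) |>.filter
      (fun t => ∑ i : Fin k, ((i : ℕ) + 1) * t i = n),
    lam ^ (∑ i : Fin k, t i) / ∏ i : Fin k, (Nat.factorial (t i) : ℝ)

/-- Pmf of the Poisson distribution of order `k`: `f_k(n;λ) = e^{-kλ} h_k(n;λ)`. -/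
noncomputable def poissonOrderPmf (k n : ℕ) (lam : ℝ) : ℝ :=
  Real.exp (-(k * lam)) * poissonOrderH k n lam

/-- `m` is a mode of the Poisson distribution of order `k` with parameter `lam`. -/
def IsMode (k : ℕ) (lam : ℝ) (m : ℕ) : Prop :=
  ∀ n : ℕ, poissonOrderPmf k n lam ≤ poissonOrderPmf k m lam


open Finset
open scoped Nat

namespace PoissonOrder

variable {k : ℕ}

def tuples (k n : ℕ) : Finset (Fin k → ℕ) :=
  (Fintype.piFinset fun _ : Fin k => range (n + 1)).filter
    (fun t => ∑ i : Fin k, ((i : ℕ) + 1) * t i = n)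

noncomputable def weight (lam : ℝ) (t : Fin k → ℕ) : ℝ :=
  lam ^ (∑ i : Fin k, t i) / ∏ i : Fin k, ((t i)! : ℝ)

theorem poissonOrderH_eq_sum_weight (k n : ℕ) (lam : ℝ) :
    poissonOrderH k n lam = ∑ t ∈ tuples k n, weight lam t :=
  rfl

theorem succ_mul_le_of_sum_eq {n : ℕ} {t : Fin k → ℕ}
    (h : ∑ i : Fin k, ((i : ℕ) + 1) * t i = n) (c : Fin k) : ((c : ℕ) + 1) * t c ≤ n :=
  h ▸ single_le_sum (f := fun i : Fin k => ((i : ℕ) + 1) * t i) (fun _ _ => Nat.zero_le _)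
    (mem_univ c)

theorem mem_tuples {n : ℕ} {t : Fin k → ℕ} :
    t ∈ tuples k n ↔ ∑ i : Fin k, ((i : ℕ) + 1) * t i = n := by
  refine ⟨fun h => (mem_filter.mp h).2, fun h => mem_filter.mpr ⟨?_, h⟩⟩
  refine Fintype.mem_piFinset.mpr fun i => mem_range.mpr (Nat.lt_succ_of_le ?_)
  exact (Nat.le_mul_of_pos_left _ i.val.succ_pos).trans (succ_mul_le_of_sum_eq h i)

theorem sum_succ_mul_add_single (t : Fin k → ℕ) (c : Fin k) (a : ℕ) :
    ∑ i : Fin k, ((i : ℕ) + 1) * (t + Pi.single c a : Fin k → ℕ) i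
      = ∑ i : Fin k, ((i : ℕ) + 1) * t i + ((c : ℕ) + 1) * a := by
  simp [mul_add, sum_add_distrib, Pi.single_apply]

theorem single_zero_mem_tuples (hk : 0 < k) (n : ℕ) : Pi.single ⟨0, hk⟩ n ∈ tuples k n := by
  rw [mem_tuples]
  simp [Pi.single_apply]

theorem sub_single_add_single {t : Fin k → ℕ} {c : Fin k} (hc : t c ≠ 0) :
    t - Pi.single c 1 + Pi.single c 1 = t := by
  funext i
  by_cases hi : i = c
  · subst hi
    simp only [Pi.add_apply, Pi.sub_apply, Pi.single_eq_same]
    omega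
  · simp [hi]

theorem sum_filter_ne_zero_tuples {M : Type*} [AddCommMonoid M] (c : Fin k) (n : ℕ)
    (F : (Fin k → ℕ) → M) :
    ∑ t ∈ (tuples k (n + ((c : ℕ) + 1))).filter (fun t => t c ≠ 0), F t
      = ∑ t ∈ tuples k n, F (t + Pi.single c 1) := by
  symm
  refine sum_nbij' (· + Pi.single c 1) (· - Pi.single c 1) (fun t ht => ?_) (fun t ht => ?_)
    (fun t _ => add_tsub_cancel_right t _)
    (fun t ht => sub_single_add_single (mem_filter.mp ht).2) (fun _ _ => rfl)
  · refine mem_filter.mpr ⟨mem_tuples.mpr ?_, by simp⟩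
    rw [sum_succ_mul_add_single, mem_tuples.mp ht, mul_one]
  · obtain ⟨ht, hc⟩ := mem_filter.mp ht
    rw [mem_tuples, ← sub_single_add_single hc, sum_succ_mul_add_single, mul_one] at ht
    simpa [mem_tuples] using ht

theorem weight_nonneg {lam : ℝ} (hlam : 0 ≤ lam) (t : Fin k → ℕ) : 0 ≤ weight lam t := by
  unfold weight; positivity

theorem weight_pos {lam : ℝ} (hlam : 0 < lam) (t : Fin k → ℕ) : 0 < weight lam t := by
  unfold weight; positivity

theorem succ_mul_weight_add_single (lam : ℝ) (t : Fin k → ℕ) (c : Fin k) :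
    ((t c : ℝ) + 1) * weight lam (t + Pi.single c 1) = lam * weight lam t := by
  have hsum : ∑ i : Fin k, (t + Pi.single c 1 : Fin k → ℕ) i = ∑ i : Fin k, t i + 1 := by
    simp [sum_add_distrib]
  have hprod : ∏ i : Fin k, (((t + Pi.single c 1 : Fin k → ℕ) i)! : ℝ)
      = ((t c : ℝ) + 1) * ∏ i : Fin k, ((t i)! : ℝ) := by
    rw [← mul_prod_erase univ _ (mem_univ c),
      ← mul_prod_erase univ (fun i => ((t i)! : ℝ)) (mem_univ c),
      prod_congr rfl fun i hi => by
        rw [Pi.add_apply, Pi.single_eq_of_ne (ne_of_mem_erase hi), add_zero]]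
    simp only [Pi.add_apply, Pi.single_eq_same, Nat.factorial_succ, Nat.cast_mul, Nat.cast_add,
      Nat.cast_one]
    ring
  have : ((t c : ℝ) + 1) ≠ 0 := by positivity
  have : ∏ i : Fin k, ((t i)! : ℝ) ≠ 0 := by positivity
  rw [weight, weight, hsum, hprod, pow_succ]
  field_simp

theorem poissonOrderH_nonneg {lam : ℝ} (hlam : 0 ≤ lam) (n : ℕ) : 0 ≤ poissonOrderH k n lam :=
  sum_nonneg fun t _ => weight_nonneg hlam t

theorem poissonOrderH_pos (hk : 0 < k) {lam : ℝ} (hlam : 0 < lam) (n : ℕ) :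
    0 < poissonOrderH k n lam :=
  sum_pos' (fun t _ => weight_nonneg hlam.le t)
    ⟨_, single_zero_mem_tuples hk n, weight_pos hlam _⟩

noncomputable def moment (k : ℕ) (lam : ℝ) (c : Fin k) (n : ℕ) : ℝ :=
  ∑ t ∈ tuples k n, (t c : ℝ) * weight lam t

theorem moment_nonneg {lam : ℝ} (hlam : 0 ≤ lam) (c : Fin k) (n : ℕ) : 0 ≤ moment k lam c n :=
  sum_nonneg fun t _ => mul_nonneg (Nat.cast_nonneg _) (weight_nonneg hlam t)

theorem moment_add (lam : ℝ) (c : Fin k) (n : ℕ) :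
    moment k lam c (n + ((c : ℕ) + 1)) = lam * poissonOrderH k n lam := by
  rw [moment, ← sum_filter_of_ne (p := fun t => t c ≠ 0) fun t _ h hc => h (by simp [hc]),
    sum_filter_ne_zero_tuples, poissonOrderH_eq_sum_weight, mul_sum]
  refine sum_congr rfl fun t _ => ?_
  rw [← succ_mul_weight_add_single lam t c]
  simp

theorem moment_eq_zero_of_lt (lam : ℝ) {c : Fin k} {n : ℕ} (h : n < (c : ℕ) + 1) :
    moment k lam c n = 0 := by
  refine sum_eq_zero fun t ht => ?_
  have := succ_mul_le_of_sum_eq (mem_tuples.mp ht) c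
  have : t c = 0 := by nlinarith
  simp [this]

theorem natCast_mul_poissonOrderH (lam : ℝ) (n : ℕ) :
    (n : ℝ) * poissonOrderH k n lam = ∑ c : Fin k, ((c : ℕ) + 1 : ℝ) * moment k lam c n := by
  calc (n : ℝ) * poissonOrderH k n lam
      = ∑ t ∈ tuples k n, ∑ c : Fin k, ((c : ℕ) + 1 : ℝ) * ((t c : ℝ) * weight lam t) := by
        rw [poissonOrderH_eq_sum_weight, mul_sum]
        refine sum_congr rfl fun t ht => ?_
        rw [← mem_tuples.mp ht]
        simp only [← mul_assoc, ← sum_mul]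
        push_cast
        rfl
    _ = ∑ c : Fin k, ((c : ℕ) + 1 : ℝ) * moment k lam c n := by
        rw [sum_comm]
        simp only [moment, mul_sum]

theorem sum_succ_mul_moment_add (lam : ℝ) (m : ℕ) :
    ∑ c : Fin k, ((c : ℕ) + 1 : ℝ) * (moment k lam c m + poissonOrderH k m lam)
      = (m + ∑ c : Fin k, ((c : ℕ) + 1 : ℝ)) * poissonOrderH k m lam := by
  rw [add_mul, natCast_mul_poissonOrderH, sum_mul, ← sum_add_distrib]
  exact sum_congr rfl fun c _ => by ring

theorem sum_weight_filter_ne_zero (lam : ℝ) (c : Fin k) (n : ℕ) :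
    ∑ t ∈ (tuples k (n + ((c : ℕ) + 1))).filter (fun t => t c ≠ 0), weight lam t
      = lam * ∑ t ∈ tuples k n, weight lam t / ((t c : ℝ) + 1) := by
  rw [sum_filter_ne_zero_tuples, mul_sum]
  refine sum_congr rfl fun t _ => ?_
  rw [mul_div_assoc', eq_div_iff (by positivity), mul_comm, succ_mul_weight_add_single]

theorem lam_mul_sq_le {lam : ℝ} (hlam : 0 ≤ lam) (c : Fin k) (n : ℕ) :
    lam * poissonOrderH k n lam ^ 2
      ≤ (∑ t ∈ (tuples k (n + ((c : ℕ) + 1))).filter (fun t => t c ≠ 0), weight lam t)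
        * (moment k lam c n + poissonOrderH k n lam) := by
  have hcs : (∑ t ∈ tuples k n, weight lam t) ^ 2
      ≤ (∑ t ∈ tuples k n, weight lam t / ((t c : ℝ) + 1))
        * ∑ t ∈ tuples k n, weight lam t * ((t c : ℝ) + 1) := by
    refine sum_sq_le_sum_mul_sum_of_sq_le_mul _ (fun t _ => ?_) (fun t _ => ?_) (fun t _ => ?_)
    · have := weight_nonneg hlam t; positivity
    · have := weight_nonneg hlam t; positivity
    · have : (t c : ℝ) + 1 ≠ 0 := by positivity
      rw [div_mul_eq_mul_div, mul_div_assoc, mul_div_cancel_right₀ _ this, sq]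
  have hD : ∑ t ∈ tuples k n, weight lam t * ((t c : ℝ) + 1)
      = moment k lam c n + poissonOrderH k n lam := by
    simp_rw [moment, poissonOrderH_eq_sum_weight, ← sum_add_distrib]
    exact sum_congr rfl fun t _ => by ring
  rw [sum_weight_filter_ne_zero, ← hD, mul_assoc, poissonOrderH_eq_sum_weight]
  exact mul_le_mul_of_nonneg_left hcs hlam

theorem isMode_iff {lam : ℝ} {m : ℕ} :
    IsMode k lam m ↔ ∀ n, poissonOrderH k n lam ≤ poissonOrderH k m lam := by
  simp only [IsMode, poissonOrderPmf, mul_le_mul_iff_right₀ (Real.exp_pos _)]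

section Mode

variable {lam : ℝ} {m : ℕ}

theorem moment_le_of_isMode (hlam : 0 ≤ lam) (hm : IsMode k lam m) (c : Fin k) :
    moment k lam c m ≤ lam * poissonOrderH k m lam := by
  by_cases hcm : (c : ℕ) + 1 ≤ m
  · obtain ⟨n, rfl⟩ : ∃ n, m = n + ((c : ℕ) + 1) := ⟨m - ((c : ℕ) + 1), by omega⟩
    rw [moment_add]
    exact mul_le_mul_of_nonneg_left (isMode_iff.mp hm n) hlam
  · rw [moment_eq_zero_of_lt lam (by omega)]
    exact mul_nonneg hlam (poissonOrderH_nonneg hlam m)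

theorem natCast_le_of_isMode (hk : 0 < k) (hlam : 0 < lam) (hm : IsMode k lam m) :
    (m : ℝ) ≤ (∑ c : Fin k, ((c : ℕ) + 1 : ℝ)) * lam := by
  refine le_of_mul_le_mul_right ?_ (poissonOrderH_pos hk hlam m)
  rw [natCast_mul_poissonOrderH, sum_mul, sum_mul]
  refine sum_le_sum fun c _ => ?_
  rw [mul_assoc]
  exact mul_le_mul_of_nonneg_left (moment_le_of_isMode hlam.le hm c) (by positivity)

theorem lam_mul_le_of_isMode (hk : 0 < k) (hlam : 0 < lam) (hm : IsMode k lam m) (c : Fin k) :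
    lam * poissonOrderH k m lam ≤ moment k lam c m + poissonOrderH k m lam := by
  have hE : ∑ t ∈ (tuples k (m + ((c : ℕ) + 1))).filter (fun t => t c ≠ 0), weight lam t
      ≤ poissonOrderH k m lam :=
    (sum_le_sum_of_subset_of_nonneg (filter_subset _ _) fun t _ _ =>
      weight_nonneg hlam.le t).trans (isMode_iff.mp hm _)
  have hD : 0 ≤ moment k lam c m + poissonOrderH k m lam :=
    add_nonneg (moment_nonneg hlam.le c m) (poissonOrderH_nonneg hlam.le m)
  refine le_of_mul_le_mul_right ?_ (poissonOrderH_pos hk hlam m)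
  calc lam * poissonOrderH k m lam * poissonOrderH k m lam
      = lam * poissonOrderH k m lam ^ 2 := by ring
    _ ≤ _ := lam_mul_sq_le hlam.le c m
    _ ≤ poissonOrderH k m lam * (moment k lam c m + poissonOrderH k m lam) :=
        mul_le_mul_of_nonneg_right hE hD
    _ = _ := mul_comm _ _

theorem lam_mul_lt_of_isMode (hk : 0 < k) (hlam : 0 < lam) (hm : IsMode k lam m) {c : Fin k}
    (hc : (c : ℕ) ≠ 0) :
    lam * poissonOrderH k m lam < moment k lam c m + poissonOrderH k m lam := by
  have hE : ∑ t ∈ (tuples k (m + ((c : ℕ) + 1))).filter (fun t => t c ≠ 0), weight lam t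
      < poissonOrderH k m lam := by
    refine (sum_lt_sum_of_subset (filter_subset _ _) (single_zero_mem_tuples hk _) ?_
      (weight_pos hlam _) fun t _ _ => weight_nonneg hlam.le t).trans_le (isMode_iff.mp hm _)
    simp [Fin.ext_iff, Ne.symm hc]
  have hD : 0 < moment k lam c m + poissonOrderH k m lam :=
    add_pos_of_nonneg_of_pos (moment_nonneg hlam.le c m) (poissonOrderH_pos hk hlam m)
  refine lt_of_mul_lt_mul_right ?_ (poissonOrderH_pos hk hlam m).le
  calc lam * poissonOrderH k m lam * poissonOrderH k m lam
      = lam * poissonOrderH k m lam ^ 2 := by ring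
    _ ≤ _ := lam_mul_sq_le hlam.le c m
    _ < poissonOrderH k m lam * (moment k lam c m + poissonOrderH k m lam) :=
        mul_lt_mul_of_pos_right hE hD
    _ = _ := mul_comm _ _

theorem le_add_of_isMode (hk : 0 < k) (hlam : 0 < lam) (hm : IsMode k lam m) :
    (∑ c : Fin k, ((c : ℕ) + 1 : ℝ)) * lam ≤ m + ∑ c : Fin k, ((c : ℕ) + 1 : ℝ) := by
  refine le_of_mul_le_mul_right ?_ (poissonOrderH_pos hk hlam m)
  rw [← sum_succ_mul_moment_add, sum_mul, sum_mul]
  refine sum_le_sum fun c _ => ?_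
  rw [mul_assoc]
  exact mul_le_mul_of_nonneg_left (lam_mul_le_of_isMode hk hlam hm c) (by positivity)

theorem lt_add_of_isMode (hk : 2 ≤ k) (hlam : 0 < lam) (hm : IsMode k lam m) :
    (∑ c : Fin k, ((c : ℕ) + 1 : ℝ)) * lam < m + ∑ c : Fin k, ((c : ℕ) + 1 : ℝ) := by
  have hk0 : 0 < k := by omega
  refine lt_of_mul_lt_mul_right ?_ (poissonOrderH_pos hk0 hlam m).le
  rw [← sum_succ_mul_moment_add, sum_mul, sum_mul]
  refine sum_lt_sum (fun c _ => ?_) ⟨⟨1, hk⟩, mem_univ _, ?_⟩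
  · rw [mul_assoc]
    exact mul_le_mul_of_nonneg_left (lam_mul_le_of_isMode hk0 hlam hm c) (by positivity)
  · rw [mul_assoc]
    exact mul_lt_mul_of_pos_left (lam_mul_lt_of_isMode hk0 hlam hm one_ne_zero) (by positivity)

end Mode

theorem sum_fin_val_add_one (k : ℕ) : ∑ c : Fin k, ((c : ℕ) + 1) = k * (k + 1) / 2 := by
  rw [Fin.sum_univ_eq_sum_range (· + 1), ← sum_range_succ' (fun i => i) k |>.trans (add_zero _),
    sum_range_id, mul_comm, Nat.add_sub_cancel]

end PoissonOrder

theorem stmt_11 (k : ℕ) (hk : 1 ≤ k) (lam : ℝ) (hlam : 0 < lam)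
    (m : ℕ) (hm : IsMode k lam m) :
    ⌊((k * (k + 1) / 2 : ℕ) : ℝ) * lam⌋ - (k * (k + 1) / 2 : ℕ) + 1
        - (if k = 1 then 1 else 0) ≤ (m : ℤ) ∧
    (m : ℤ) ≤ ⌊((k * (k + 1) / 2 : ℕ) : ℝ) * lam⌋ := by
  have hκ : ((k * (k + 1) / 2 : ℕ) : ℝ) = ∑ c : Fin k, ((c : ℕ) + 1 : ℝ) := by
    rw [← PoissonOrder.sum_fin_val_add_one]
    push_cast
    rfl
  have hupper := PoissonOrder.natCast_le_of_isMode hk hlam hm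
  have hlower := PoissonOrder.le_add_of_isMode hk hlam hm
  rw [← hκ] at hupper hlower
  set κ := k * (k + 1) / 2
  refine ⟨?_, Int.le_floor.mpr (by exact_mod_cast hupper)⟩
  split_ifs with hk1
  · have : ⌊(κ : ℝ) * lam⌋ < m + κ + 1 := Int.floor_lt.mpr (by push_cast; linarith)
    omega
  · have hstrict := PoissonOrder.lt_add_of_isMode (by omega) hlam hm
    rw [← hκ] at hstrict
    have : ⌊(κ : ℝ) * lam⌋ < m + κ := Int.floor_lt.mpr (by exact_mod_cast hstrict)
    omega
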